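/- arXiv:2510.00303 — 3 statements merged into one kernel-verified Lean document; each statement's English description precedes it below -/
import Mathlib

section
/- The Log-Determinant function f(A) = log det(S_A), where S is a symmetric positive definite matrix indexed by the finite ground set V and S_A is its principal submatrix indexed by A (with f(∅) = 0), is submodular: f(A) + f(B) ≥ f(A ∪ B) + f(A ∩ B) for all A, B ⊆ V. -/
open Finset Matrix

/-- The principal submatrix of `S` indexed by a finset `A`. -/
def principalSub {V : Type*} (S : Matrix V V ℝ) (A : Finset V) :
    Matrix {x // x ∈ A} {x // x ∈ A} ℝ :=
  S.submatrix (fun i => (i : V)) (fun j => (j : V))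

/-!
Put `C = A ∩ B`. For every `X ⊇ C` the Schur complement formula gives
`det S_X = det S_C · det T_{X \ C}`, where `T` is the Schur complement of `S_C` in `S`, and
`(A ∪ B) \ C` is the disjoint union of `A \ C` and `B \ C`. Hence
`det S_{A ∪ B} · det S_C ≤ det S_A · det S_B` (Koteljanskii's inequality, whose logarithm is the
claim) is Fischer's inequality `det T_{D ∪ E} ≤ det T_D · det T_E` for the positive definite
matrix `T_{(A ∪ B) \ C}`.

Fischer's inequality is again the Schur complement formula, combined with the monotonicity
`det P ≤ det (P + N)` for `P` positive definite and `N` positive semidefinite: writing `N = Bᴴ B`,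
the matrix determinant lemma gives `det (P + N) = det P · det (1 + B P⁻¹ Bᴴ)`, and `det (1 + M) ≥ 1`
for positive semidefinite `M` because its eigenvalues are `1 + λᵢ ≥ 1`.
-/

namespace Matrix

variable {m n : Type*}

lemma IsHermitian.toBlocks₂₁ {α : Type*} [Star α] {M : Matrix (m ⊕ n) (m ⊕ n) α}
    (hM : M.IsHermitian) : M.toBlocks₂₁ = M.toBlocks₁₂ᴴ := by
  ext i j
  exact (hM.apply _ _).symm

variable [Fintype m] [Fintype n] [DecidableEq m] [DecidableEq n]

lemma det_eq_det_toBlocks₁₁_mul_det_schur {α : Type*} [CommRing α]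
    {M : Matrix (m ⊕ n) (m ⊕ n) α} (h : IsUnit M.toBlocks₁₁.det) :
    M.det = M.toBlocks₁₁.det *
      (M.toBlocks₂₂ - M.toBlocks₂₁ * M.toBlocks₁₁⁻¹ * M.toBlocks₁₂).det := by
  let _ := invertibleOfIsUnitDet _ h
  conv_lhs => rw [← fromBlocks_toBlocks M]
  rw [det_fromBlocks₁₁, invOf_eq_nonsing_inv]

lemma IsHermitian.det_cfc {𝕜 : Type*} [RCLike 𝕜] {A : Matrix n n 𝕜} (hA : A.IsHermitian)
    (f : ℝ → ℝ) : (cfc f A).det = ∏ i, (f (hA.eigenvalues i) : 𝕜) := by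
  rw [hA.cfc_eq]
  simp [IsHermitian.cfc, -Unitary.conjStarAlgAut_apply]

lemma PosSemidef.one_le_det_one_add {A : Matrix n n ℝ} (hA : A.PosSemidef) :
    1 ≤ (1 + A).det := by
  have hA' := hA.isHermitian
  have h : cfc (fun x : ℝ ↦ 1 + x) A = 1 + A := by
    rw [cfc_const_add _ _ A, cfc_id' ℝ A, map_one]
  rw [← h, hA'.det_cfc]
  exact Finset.one_le_prod fun i _ ↦ le_add_of_nonneg_right (hA.eigenvalues_nonneg i)

open scoped MatrixOrder in
lemma PosDef.det_le_det_add {P N : Matrix n n ℝ} (hP : P.PosDef) (hN : N.PosSemidef) :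
    P.det ≤ (P + N).det := by
  obtain ⟨B, rfl⟩ := CStarAlgebra.nonneg_iff_eq_star_mul_self.mp hN.nonneg
  rw [star_eq_conjTranspose, det_add_mul _ _ hP.det_pos.ne'.isUnit]
  exact le_mul_of_one_le_right hP.det_pos.le
    (hP.inv.posSemidef.mul_mul_conjTranspose_same B).one_le_det_one_add

lemma PosDef.posDef_schur {M : Matrix (m ⊕ n) (m ⊕ n) ℝ} (hM : M.PosDef) :
    (M.toBlocks₂₂ - M.toBlocks₂₁ * M.toBlocks₁₁⁻¹ * M.toBlocks₁₂).PosDef := by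
  have h₁₁ : M.toBlocks₁₁.PosDef := hM.submatrix Sum.inl_injective
  let _ := h₁₁.isUnit.invertible
  have hpsd : (M.toBlocks₂₂ - M.toBlocks₂₁ * M.toBlocks₁₁⁻¹ * M.toBlocks₁₂).PosSemidef := by
    rw [hM.isHermitian.toBlocks₂₁, ← h₁₁.fromBlocks₁₁, ← hM.isHermitian.toBlocks₂₁,
      fromBlocks_toBlocks]
    exact hM.posSemidef
  refine hpsd.posDef_iff_det_ne_zero.mpr fun h ↦ hM.det_pos.ne' ?_
  rw [det_eq_det_toBlocks₁₁_mul_det_schur h₁₁.det_pos.ne'.isUnit, h, mul_zero]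

theorem PosDef.det_le_det_toBlocks₁₁_mul_det_toBlocks₂₂ {M : Matrix (m ⊕ n) (m ⊕ n) ℝ}
    (hM : M.PosDef) : M.det ≤ M.toBlocks₁₁.det * M.toBlocks₂₂.det := by
  have h₁₁ : M.toBlocks₁₁.PosDef := hM.submatrix Sum.inl_injective
  have hcorr : (M.toBlocks₂₁ * M.toBlocks₁₁⁻¹ * M.toBlocks₁₂).PosSemidef := by
    rw [hM.isHermitian.toBlocks₂₁]
    exact h₁₁.inv.posSemidef.conjTranspose_mul_mul_same _
  rw [det_eq_det_toBlocks₁₁_mul_det_schur h₁₁.det_pos.ne'.isUnit]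
  refine mul_le_mul_of_nonneg_left ?_ h₁₁.det_pos.le
  simpa using hM.posDef_schur.det_le_det_add hcorr

end Matrix

section principalSub

variable {V : Type*} {S : Matrix V V ℝ}

lemma posDef_principalSub (hS : S.PosDef) (A : Finset V) : (principalSub S A).PosDef :=
  hS.submatrix Subtype.val_injective

variable [DecidableEq V]

/-- Restricted to any `D` disjoint from `C`, this is the Schur complement of `S_C` in
`S_{C ∪ D}`. -/
noncomputable def schurCompl (S : Matrix V V ℝ) (C : Finset V) : Matrix V V ℝ :=
  S - S.submatrix id ((↑) : C → V) * (principalSub S C)⁻¹ * S.submatrix ((↑) : C → V) id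

def principalSubUnionBlocks (S : Matrix V V ℝ) {C D : Finset V} (hCD : Disjoint C D) :
    Matrix (C ⊕ D) (C ⊕ D) ℝ :=
  (principalSub S (C ∪ D)).submatrix (Equiv.Finset.union C D hCD) (Equiv.Finset.union C D hCD)

variable {C D : Finset V}

lemma det_principalSubUnionBlocks (hCD : Disjoint C D) :
    (principalSubUnionBlocks S hCD).det = (principalSub S (C ∪ D)).det :=
  det_submatrix_equiv_self _ _

lemma posDef_principalSubUnionBlocks (h : (principalSub S (C ∪ D)).PosDef)
    (hCD : Disjoint C D) : (principalSubUnionBlocks S hCD).PosDef :=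
  h.submatrix (Equiv.Finset.union C D hCD).injective

lemma det_principalSub_union (hC : IsUnit (principalSub S C).det) (hCD : Disjoint C D) :
    (principalSub S (C ∪ D)).det =
      (principalSub S C).det * (principalSub (schurCompl S C) D).det := by
  rw [← det_principalSubUnionBlocks hCD]
  exact det_eq_det_toBlocks₁₁_mul_det_schur hC

lemma det_principalSub_of_subset (hC : IsUnit (principalSub S C).det) {X : Finset V}
    (hCX : C ⊆ X) :
    (principalSub S X).det =
      (principalSub S C).det * (principalSub (schurCompl S C) (X \ C)).det := by
  conv_lhs => rw [← Finset.union_sdiff_of_subset hCX]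
  exact det_principalSub_union hC Finset.disjoint_sdiff

lemma posDef_principalSub_schurCompl (h : (principalSub S (C ∪ D)).PosDef)
    (hCD : Disjoint C D) : (principalSub (schurCompl S C) D).PosDef :=
  (posDef_principalSubUnionBlocks h hCD).posDef_schur

lemma det_principalSub_union_le (h : (principalSub S (C ∪ D)).PosDef) (hCD : Disjoint C D) :
    (principalSub S (C ∪ D)).det ≤ (principalSub S C).det * (principalSub S D).det := by
  rw [← det_principalSubUnionBlocks hCD]
  exact (posDef_principalSubUnionBlocks h hCD).det_le_det_toBlocks₁₁_mul_det_toBlocks₂₂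

theorem det_principalSub_union_mul_inter_le (hS : S.PosDef) (A B : Finset V) :
    (principalSub S (A ∪ B)).det * (principalSub S (A ∩ B)).det ≤
      (principalSub S A).det * (principalSub S B).det := by
  set C := A ∩ B
  set T := schurCompl S C
  have hC := (posDef_principalSub hS C).det_pos
  have hsplit {X : Finset V} (hCX : C ⊆ X) := det_principalSub_of_subset hC.ne'.isUnit hCX
  have hunion : (A ∪ B) \ C = A \ C ∪ B \ C := Finset.union_sdiff_distrib ..
  have hdisj : Disjoint (A \ C) (B \ C) := by
    simpa [C, Finset.sdiff_inter_self_left, Finset.sdiff_inter_self_right] using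
      disjoint_sdiff_sdiff
  have hT : (principalSub T (A \ C ∪ B \ C)).PosDef := by
    rw [← hunion]
    exact posDef_principalSub_schurCompl (posDef_principalSub hS _) Finset.disjoint_sdiff
  calc (principalSub S (A ∪ B)).det * (principalSub S C).det
      = (principalSub S C).det * (principalSub T (A \ C ∪ B \ C)).det *
          (principalSub S C).det := by
        rw [hsplit (inter_subset_left.trans subset_union_left), hunion]
    _ ≤ (principalSub S C).det * ((principalSub T (A \ C)).det * (principalSub T (B \ C)).det) *
          (principalSub S C).det := by
        gcongr
        exact det_principalSub_union_le hT hdisj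
    _ = (principalSub S A).det * (principalSub S B).det := by
        rw [hsplit inter_subset_left, hsplit inter_subset_right]
        ring

end principalSub

theorem logdet_submodular_general {V : Type*} [DecidableEq V]
    (S : Matrix V V ℝ) (hSpd : S.PosDef) :
    ∀ A B : Finset V,
      Real.log (principalSub S A).det + Real.log (principalSub S B).det ≥
      Real.log (principalSub S (A ∪ B)).det + Real.log (principalSub S (A ∩ B)).det := by
  intro A B
  have hpos (X : Finset V) : 0 < (principalSub S X).det := (posDef_principalSub hSpd X).det_pos
  rw [ge_iff_le, ← Real.log_mul (hpos _).ne' (hpos _).ne',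
    ← Real.log_mul (hpos _).ne' (hpos _).ne']
  exact Real.log_le_log (mul_pos (hpos _) (hpos _)) (det_principalSub_union_mul_inter_le hSpd A B)

/-- The Log-Determinant function `f(A) = log det(S_A)` of a symmetric positive
definite matrix `S` is submodular (`det` of the empty matrix is `1`, so `f ∅ = 0`). -/
theorem logdet_submodular {V : Type*} [DecidableEq V] [Fintype V]
    (S : Matrix V V ℝ) (hS : S.IsSymm) (hSpd : S.PosDef) :
    ∀ A B : Finset V,
      Real.log (principalSub S A).det + Real.log (principalSub S B).det ≥
      Real.log (principalSub S (A ∪ B)).det + Real.log (principalSub S (A ∩ B)).det :=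
  logdet_submodular_general S hSpd
end

section
/- Let f : 2^V → ℝ≥0 be monotone submodular with f(∅) = 0, and let A* be an optimal solution to max{f(A) : |A| ≤ k}. The greedy algorithm, which starts from ∅ and at each of k steps adds the element with maximum marginal gain, outputs a set A_k with f(A_k) ≥ (1 − (1 − 1/k)^k) f(A*) ≥ (1 − e^{-1}) f(A*). -/
open Finset

/-!
Submodularity bounds the value of any set `S` with `|S| ≤ k` by `f A` plus the marginal gains
of its elements over `A`, each of which is at most the greedy gain. Hence every greedy step
closes at least a `1/k` fraction of the gap `f S - f A`, so after `k` steps the gap is at most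
`(1 - 1/k)^k f S ≤ e⁻¹ f S`.
-/

section Submodular

variable {V : Type*} [DecidableEq V] (f : Finset V → ℝ)

theorem apply_union_le_add_sum_marginal
    (hsub : ∀ A B : Finset V, f A + f B ≥ f (A ∪ B) + f (A ∩ B)) (A S : Finset V) :
    f (A ∪ S) ≤ f A + ∑ v ∈ S \ A, (f (insert v A) - f A) := by
  induction S using Finset.induction_on with
  | empty => simp
  | @insert a S haS ih =>
    by_cases haA : a ∈ A
    · rwa [union_insert, insert_eq_of_mem (mem_union_left S haA), insert_sdiff_of_mem S haA]
    · have hunion : insert a A ∪ (A ∪ S) = A ∪ insert a S := by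
        ext x
        simp only [mem_union, mem_insert]
        tauto
      have hinter : insert a A ∩ (A ∪ S) = A := by
        ext x
        simp only [mem_inter, mem_insert, mem_union]
        constructor
        · rintro ⟨rfl | hxA, hxA' | hxS⟩
          exacts [(haA hxA').elim, (haS hxS).elim, hxA, hxA]
        · exact fun hxA => ⟨Or.inr hxA, Or.inl hxA⟩
      have hnotin : a ∉ S \ A := fun h => haS (mem_sdiff.1 h).1
      have hsub_step := hsub (insert a A) (A ∪ S)
      rw [hunion, hinter] at hsub_step
      rw [insert_sdiff_of_notMem S haA, sum_insert hnotin]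
      linarith

theorem apply_le_add_card_mul_greedy_gain (hmono : ∀ A B : Finset V, A ⊆ B → f A ≤ f B)
    (hsub : ∀ A B : Finset V, f A + f B ≥ f (A ∪ B) + f (A ∩ B))
    {k : ℕ} {S A : Finset V} (hS : S.card ≤ k) {v : V}
    (hmax : ∀ w ∉ A, f (insert w A) ≤ f (insert v A)) :
    f S ≤ f A + k * (f (insert v A) - f A) := by
  have hgain_nonneg : 0 ≤ f (insert v A) - f A := sub_nonneg.2 (hmono _ _ (subset_insert v A))
  have hcard : ((S \ A).card : ℝ) ≤ k := by exact_mod_cast (card_le_card sdiff_subset).trans hS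
  calc f S ≤ f (A ∪ S) := hmono _ _ subset_union_right
    _ ≤ f A + ∑ w ∈ S \ A, (f (insert w A) - f A) :=
        apply_union_le_add_sum_marginal f hsub A S
    _ ≤ f A + ∑ _w ∈ S \ A, (f (insert v A) - f A) := by
        gcongr with w hw
        exact hmax w (mem_sdiff.1 hw).2
    _ = f A + (S \ A).card * (f (insert v A) - f A) := by rw [sum_const, nsmul_eq_mul]
    _ ≤ f A + k * (f (insert v A) - f A) := by gcongr

theorem sub_apply_insert_le_one_sub_div_mul (hmono : ∀ A B : Finset V, A ⊆ B → f A ≤ f B)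
    (hsub : ∀ A B : Finset V, f A + f B ≥ f (A ∪ B) + f (A ∩ B))
    {k : ℕ} (hk : 1 ≤ k) {S A : Finset V} (hS : S.card ≤ k) {v : V}
    (hmax : ∀ w ∉ A, f (insert w A) ≤ f (insert v A)) :
    f S - f (insert v A) ≤ (1 - 1 / (k : ℝ)) * (f S - f A) := by
  have hk0 : (0 : ℝ) < k := by exact_mod_cast hk
  have hbound := apply_le_add_card_mul_greedy_gain f hmono hsub hS hmax
  have hfraction : (f S - f A) / k ≤ f (insert v A) - f A := by
    rw [div_le_iff₀ hk0]
    linarith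
  have hexpand : (1 - 1 / (k : ℝ)) * (f S - f A) = (f S - f A) - (f S - f A) / k := by ring
  linarith

theorem sub_apply_greedy_le_one_sub_div_pow (hmono : ∀ A B : Finset V, A ⊆ B → f A ≤ f B)
    (hsub : ∀ A B : Finset V, f A + f B ≥ f (A ∪ B) + f (A ∩ B))
    {k : ℕ} (hk : 1 ≤ k) {S : Finset V} (hS : S.card ≤ k)
    {A : ℕ → Finset V} (hA0 : A 0 = ∅) (hempty : f ∅ = 0)
    (hgreedy : ∀ j < k, ∃ v : V, v ∉ A j ∧ A (j + 1) = insert v (A j) ∧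
      ∀ w : V, w ∉ A j → f (insert w (A j)) ≤ f (insert v (A j))) :
    ∀ j ≤ k, f S - f (A j) ≤ (1 - 1 / (k : ℝ)) ^ j * f S := by
  have hratio : 0 ≤ 1 - 1 / (k : ℝ) := by
    rw [sub_nonneg, div_le_one (by exact_mod_cast hk)]
    exact_mod_cast hk
  intro j hj
  induction j with
  | zero => simp [hA0, hempty]
  | succ j ih =>
    obtain ⟨v, -, hAsucc, hmax⟩ := hgreedy j hj
    calc f S - f (A (j + 1)) ≤ (1 - 1 / (k : ℝ)) * (f S - f (A j)) := by
          rw [hAsucc]; exact sub_apply_insert_le_one_sub_div_mul f hmono hsub hk hS hmax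
      _ ≤ (1 - 1 / (k : ℝ)) * ((1 - 1 / (k : ℝ)) ^ j * f S) := by gcongr; exact ih (by omega)
      _ = (1 - 1 / (k : ℝ)) ^ (j + 1) * f S := by ring

end Submodular

theorem greedy_approximation_general {V : Type*} [DecidableEq V]
    (f : Finset V → ℝ)
    (hmono : ∀ A B : Finset V, A ⊆ B → f A ≤ f B)
    (hsub : ∀ A B : Finset V, f A + f B ≥ f (A ∪ B) + f (A ∩ B))
    (hempty : f ∅ = 0)
    (k : ℕ) (hk : 1 ≤ k)
    (Astar : Finset V) (hAcard : Astar.card ≤ k)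
    (A : ℕ → Finset V) (hA0 : A 0 = ∅)
    (hgreedy : ∀ j < k, ∃ v : V, v ∉ A j ∧ A (j + 1) = insert v (A j) ∧
      ∀ w : V, w ∉ A j → f (insert w (A j)) ≤ f (insert v (A j))) :
    f (A k) ≥ (1 - (1 - 1 / (k : ℝ)) ^ k) * f Astar ∧
    (1 - (1 - 1 / (k : ℝ)) ^ k) * f Astar ≥ (1 - Real.exp (-1)) * f Astar := by
  have hgap :=
    sub_apply_greedy_le_one_sub_div_pow f hmono hsub hk hAcard hA0 hempty hgreedy k le_rfl
  have hopt_nonneg : 0 ≤ f Astar := hempty ▸ hmono ∅ Astar (empty_subset Astar)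
  have hpow : (1 - 1 / (k : ℝ)) ^ k ≤ Real.exp (-1) :=
    Real.one_sub_div_pow_le_exp_neg (by exact_mod_cast hk)
  constructor
  · linarith [sub_mul 1 ((1 - 1 / (k : ℝ)) ^ k) (f Astar)]
  · exact mul_le_mul_of_nonneg_right (by linarith) hopt_nonneg

/-- Greedy maximization of a monotone, normalized, nonnegative submodular
function under a cardinality constraint achieves a
`1 − (1 − 1/k)^k ≥ 1 − e⁻¹` approximation guarantee. -/
theorem greedy_approximation {V : Type*} [DecidableEq V] [Fintype V]
    (f : Finset V → ℝ)
    (hnn : ∀ A : Finset V, 0 ≤ f A)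
    (hmono : ∀ A B : Finset V, A ⊆ B → f A ≤ f B)
    (hsub : ∀ A B : Finset V, f A + f B ≥ f (A ∪ B) + f (A ∩ B))
    (hempty : f ∅ = 0)
    (k : ℕ) (hk : 1 ≤ k)
    (Astar : Finset V) (hAcard : Astar.card ≤ k)
    (hAopt : ∀ B : Finset V, B.card ≤ k → f B ≤ f Astar)
    (A : ℕ → Finset V) (hA0 : A 0 = ∅)
    (hgreedy : ∀ j < k, ∃ v : V, v ∉ A j ∧ A (j + 1) = insert v (A j) ∧
      ∀ w : V, w ∉ A j → f (insert w (A j)) ≤ f (insert v (A j))) :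
    f (A k) ≥ (1 - (1 - 1 / (k : ℝ)) ^ k) * f Astar ∧
    (1 - (1 - 1 / (k : ℝ)) ^ k) * f Astar ≥ (1 - Real.exp (-1)) * f Astar :=
  greedy_approximation_general f hmono hsub hempty k hk Astar hAcard A hA0 hgreedy
end

section
/- Under the hypotheses of the greedy analysis (f monotone submodular, f(∅)=0, A* optimal with |A*| ≤ k), each greedy step satisfies f(A_{j+1}) − f(A_j) ≥ (f(A*) − f(A_j)) / k. -/
/-!
Adding the elements of `A* \ A_j` to `A_j` one at a time, submodularity bounds each increment by
the marginal gain of that element at `A_j`, and the greedy choice bounds every such marginal gain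
by `f(A_{j+1}) − f(A_j)`. Since `|A* \ A_j| ≤ k` and monotonicity gives `f(A*) ≤ f(A_j ∪ A*)`,
the gap `f(A*) − f(A_j)` is at most `k` greedy gains.
-/

open Finset

section SetFunction

variable {V : Type*} [DecidableEq V] (f : Finset V → ℝ)

theorem sub_le_sum_marginal_of_submodular
    (hsub : ∀ A B : Finset V, f A + f B ≥ f (A ∪ B) + f (A ∩ B)) (A S : Finset V) :
    f (A ∪ S) - f A ≤ ∑ w ∈ S, (f (insert w A) - f A) := by
  induction S using Finset.induction_on with
  | empty => simp
  | @insert w S hw ih =>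
    have hunion : insert w A ∪ (A ∪ S) = A ∪ insert w S := by
      ext x; simp only [mem_union, mem_insert]; tauto
    -- `w ∉ S` is what makes the overlap exactly `A`
    have hinter : insert w A ∩ (A ∪ S) = A := by
      ext x; simp only [mem_inter, mem_insert, mem_union]
      constructor
      · rintro ⟨rfl | hx, hx' | hx'⟩ <;> first | assumption | exact absurd hx' hw
      · exact fun hx => ⟨Or.inr hx, Or.inl hx⟩
    have := hsub (insert w A) (A ∪ S)
    rw [hunion, hinter] at this
    rw [sum_insert hw]
    linarith

theorem sub_le_card_sdiff_mul_of_marginal_le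
    (hmono : ∀ A B : Finset V, A ⊆ B → f A ≤ f B)
    (hsub : ∀ A B : Finset V, f A + f B ≥ f (A ∪ B) + f (A ∩ B))
    (A B : Finset V) (g : ℝ) (hg : ∀ w, w ∉ A → f (insert w A) - f A ≤ g) :
    f B - f A ≤ #(B \ A) * g := by
  calc f B - f A ≤ f (A ∪ B \ A) - f A := by
        rw [union_sdiff_self_eq_union]
        linarith [hmono B (A ∪ B) subset_union_right]
    _ ≤ ∑ w ∈ B \ A, (f (insert w A) - f A) := sub_le_sum_marginal_of_submodular f hsub A _
    _ ≤ #(B \ A) * g := by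
        rw [← nsmul_eq_mul]
        exact sum_le_card_nsmul _ _ _ fun w hw => hg w (mem_sdiff.mp hw).2

end SetFunction

theorem greedy_step_gain_general {V : Type*} [DecidableEq V]
    (f : Finset V → ℝ)
    (hmono : ∀ A B : Finset V, A ⊆ B → f A ≤ f B)
    (hsub : ∀ A B : Finset V, f A + f B ≥ f (A ∪ B) + f (A ∩ B))
    (k : ℕ)
    (Astar : Finset V) (hAcard : Astar.card ≤ k)
    (Aj : Finset V) (v : V)
    (hargmax : ∀ w : V, w ∉ Aj → f (insert w Aj) ≤ f (insert v Aj)) :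
    f (insert v Aj) - f Aj ≥ (f Astar - f Aj) / (k : ℝ) := by
  have hgain : 0 ≤ f (insert v Aj) - f Aj := sub_nonneg.mpr (hmono _ _ (subset_insert v Aj))
  have hgap := sub_le_card_sdiff_mul_of_marginal_le f hmono hsub Aj Astar _
    fun w hw => sub_le_sub_right (hargmax w hw) _
  have hcard : (#(Astar \ Aj) : ℝ) ≤ k := by
    exact_mod_cast (card_le_card sdiff_subset).trans hAcard
  refine div_le_of_le_mul₀ (Nat.cast_nonneg k) hgain ?_
  linarith [mul_le_mul_of_nonneg_right hcard hgain]

/-- Each greedy step gains at least a `1/k` fraction of the remaining gap to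
the optimum: `f(A_{j+1}) − f(A_j) ≥ (f(A*) − f(A_j)) / k`. -/
theorem greedy_step_gain {V : Type*} [DecidableEq V] [Fintype V]
    (f : Finset V → ℝ)
    (hmono : ∀ A B : Finset V, A ⊆ B → f A ≤ f B)
    (hsub : ∀ A B : Finset V, f A + f B ≥ f (A ∪ B) + f (A ∩ B))
    (hempty : f ∅ = 0)
    (k : ℕ) (hk : 1 ≤ k)
    (Astar : Finset V) (hAcard : Astar.card ≤ k)
    (hAopt : ∀ B : Finset V, B.card ≤ k → f B ≤ f Astar)
    (Aj : Finset V) (v : V) (hv : v ∉ Aj)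
    (hargmax : ∀ w : V, w ∉ Aj → f (insert w Aj) ≤ f (insert v Aj)) :
    f (insert v Aj) - f Aj ≥ (f Astar - f Aj) / (k : ℝ) :=
  greedy_step_gain_general f hmono hsub k Astar hAcard Aj v hargmax
end
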